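/- arXiv:2008.09643 — 2 statements merged into one kernel-verified Lean document; each statement's English description precedes it below -/
import Mathlib

section
/- Let m ≥ 1 and n ≥ 1, and let (x₁, y₁), …, (xₙ, yₙ) be a finite dataset with yᵢ ∈ Fin m, and let l : Fin m → X → ℝ be logit functions. Then the empirical average log-likelihood L(T) = (1/n) ∑_{i=1}^n log( exp(l yᵢ xᵢ / T) / ∑_{j=1}^m exp(l j xᵢ / T) ) is a unimodal (quasiconcave) function of T on (0, ∞); that is, for all 0 < T₁ ≤ T₂ ≤ T₃ one has L(T₂) ≥ min(L(T₁), L(T₃)). -/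
/-!
With `β = 1 / T`, each summand is `β * a - log (∑ j, exp (β * b j))`, which is concave in `β`
because log-sum-exp is convex (weighted AM–GM applied to the two softmax distributions at the
endpoints). The average is therefore concave, hence quasiconcave, in `β`, and quasiconcavity
survives the order-reversing change of variables `T ↦ T⁻¹`.
-/

open Real Finset Set

theorem convexOn_log_sum_exp_mul {ι : Type*} [Fintype ι] (b : ι → ℝ) :
    ConvexOn ℝ univ fun β => log (∑ j, exp (β * b j)) := by
  cases isEmpty_or_nonempty ι
  · simpa using convexOn_const (0 : ℝ) convex_univ
  have hpos (δ : ℝ) : 0 < ∑ j, exp (δ * b j) :=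
    Finset.sum_pos (fun j _ => exp_pos _) Finset.univ_nonempty
  have hnormalized (δ : ℝ) : ∑ j, exp (δ * b j - log (∑ j, exp (δ * b j))) = 1 := by
    simp_rw [exp_sub, exp_log (hpos δ), ← Finset.sum_div, div_self (hpos δ).ne']
  refine ⟨convex_univ, fun β _ γ _ t u ht hu htu => ?_⟩
  set A := log (∑ j, exp (β * b j))
  set B := log (∑ j, exp (γ * b j))
  have key : ∑ j, exp ((t * β + u * γ) * b j - (t * A + u * B)) ≤ 1 := calc
    _ = ∑ j, exp (β * b j - A) ^ t * exp (γ * b j - B) ^ u := by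
      congr! 1 with j
      rw [← exp_mul, ← exp_mul, ← exp_add]
      ring_nf
    _ ≤ ∑ j, (t * exp (β * b j - A) + u * exp (γ * b j - B)) :=
      sum_le_sum fun j _ =>
        geom_mean_le_arith_mean2_weighted ht hu (exp_pos _).le (exp_pos _).le htu
    _ = 1 := by
      rw [sum_add_distrib, ← mul_sum, ← mul_sum, hnormalized, hnormalized, mul_one, mul_one, htu]
  simp_rw [exp_sub, ← Finset.sum_div, div_le_one (exp_pos _)] at key
  simpa only [smul_eq_mul, log_le_iff_le_exp (hpos _)] using key

/-- `β` is the inverse temperature `1 / T`. -/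
noncomputable def logSoftmax {ι : Type*} [Fintype ι] (b : ι → ℝ) (k : ι) (β : ℝ) : ℝ :=
  β * b k - log (∑ j, exp (β * b j))

theorem concaveOn_logSoftmax {ι : Type*} [Fintype ι] (b : ι → ℝ) (k : ι) :
    ConcaveOn ℝ univ (logSoftmax b k) :=
  (LinearMap.id.smulRight (b k)).concaveOn convex_univ |>.sub (convexOn_log_sum_exp_mul b)

theorem log_exp_div_sum_exp_div {ι : Type*} [Fintype ι] (b : ι → ℝ) (k : ι) (T : ℝ) :
    log (exp (b k / T) / ∑ j, exp (b j / T)) = logSoftmax b k T⁻¹ := by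
  have hpos : 0 < ∑ j, exp (b j / T) := Finset.sum_pos (fun j _ => exp_pos _) ⟨k, mem_univ k⟩
  rw [log_div (exp_pos _).ne' hpos.ne', log_exp]
  simp only [logSoftmax, div_eq_inv_mul]

theorem concaveOn_sum {𝕜 E β ι : Type*} [Semiring 𝕜] [PartialOrder 𝕜] [AddCommMonoid E]
    [SMul 𝕜 E] [AddCommMonoid β] [PartialOrder β] [IsOrderedAddMonoid β] [Module 𝕜 β]
    {s : Set E} (hs : Convex 𝕜 s) {t : Finset ι} {f : ι → E → β}
    (hf : ∀ i ∈ t, ConcaveOn 𝕜 s (f i)) : ConcaveOn 𝕜 s fun x => ∑ i ∈ t, f i x := by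
  classical
  induction t using Finset.induction_on with
  | empty => simpa using concaveOn_const (0 : β) hs
  | insert i t hi ih =>
    simp_rw [sum_insert hi]
    exact (hf i (mem_insert_self i t)).add (ih fun j hj => hf j (mem_insert_of_mem hj))

theorem QuasiconcaveOn.min_le_of_mem_Icc {𝕜 β : Type*} [Field 𝕜] [LinearOrder 𝕜]
    [IsStrictOrderedRing 𝕜] [LinearOrder β] {s : Set 𝕜} {f : 𝕜 → β}
    (hf : QuasiconcaveOn 𝕜 s f) {a b c : 𝕜} (ha : a ∈ s) (hc : c ∈ s) (hb : b ∈ Icc a c) :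
    min (f a) (f c) ≤ f b :=
  ((convex_iff_ordConnected.mp (hf (min (f a) (f c)))).out ⟨ha, min_le_left _ _⟩
    ⟨hc, min_le_right _ _⟩ hb).2

theorem empirical_log_likelihood_unimodal_general
    {X : Type*} (m n : ℕ)
    (x : Fin n → X) (y : Fin n → Fin m) (l : Fin m → X → ℝ)
    (L : ℝ → ℝ)
    (hL : ∀ T : ℝ, 0 < T →
      L T = (1 / (n : ℝ)) * ∑ i : Fin n,
        Real.log (Real.exp (l (y i) (x i) / T) / ∑ j : Fin m, Real.exp (l j (x i) / T))) :
    ∀ T₁ T₂ T₃ : ℝ, 0 < T₁ → T₁ ≤ T₂ → T₂ ≤ T₃ →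
      min (L T₁) (L T₃) ≤ L T₂ := by
  intro T₁ T₂ T₃ hT₁ h₁₂ h₂₃
  set G : ℝ → ℝ := fun β => (1 / (n : ℝ)) * ∑ i, logSoftmax (fun j => l j (x i)) (y i) β
  have hG : ConcaveOn ℝ univ G :=
    (concaveOn_sum convex_univ fun i _ => concaveOn_logSoftmax _ _).smul (by positivity)
  have hLG (T : ℝ) (hT : 0 < T) : L T = G T⁻¹ :=
    (hL T hT).trans <| congrArg _ <|
      sum_congr rfl fun i _ => log_exp_div_sum_exp_div (fun j => l j (x i)) (y i) T
  have hT₂ : 0 < T₂ := hT₁.trans_le h₁₂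
  rw [hLG T₁ hT₁, hLG T₂ hT₂, hLG T₃ (hT₂.trans_le h₂₃), min_comm]
  exact hG.quasiconcaveOn.min_le_of_mem_Icc trivial trivial
    ⟨inv_anti₀ hT₂ h₂₃, inv_anti₀ hT₁ h₁₂⟩

/-- The empirical average temperature-scaled log-likelihood of a finite dataset is
unimodal (quasiconcave) in the temperature `T` on `(0, ∞)`. -/
theorem empirical_log_likelihood_unimodal
    {X : Type*} (m n : ℕ) (hm : 1 ≤ m) (hn : 1 ≤ n)
    (x : Fin n → X) (y : Fin n → Fin m) (l : Fin m → X → ℝ)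
    (L : ℝ → ℝ)
    (hL : ∀ T : ℝ, 0 < T →
      L T = (1 / (n : ℝ)) * ∑ i : Fin n,
        Real.log (Real.exp (l (y i) (x i) / T) / ∑ j : Fin m, Real.exp (l j (x i) / T))) :
    ∀ T₁ T₂ T₃ : ℝ, 0 < T₁ → T₁ ≤ T₂ → T₂ ≤ T₃ →
      min (L T₁) (L T₃) ≤ L T₂ :=
  empirical_log_likelihood_unimodal_general m n x y l L hL
end

section
/- Let m ≥ 1, let l₁, …, l_m ∈ ℝ be fixed logits, and let y ∈ Fin m. Then the single-sample temperature-scaled log-likelihood T ↦ log( exp(l_y / T) / ∑_{j=1}^m exp(l_j / T) ) is a unimodal (quasiconcave) function of T on (0, ∞): for all 0 < T₁ ≤ T₂ ≤ T₃, its value at T₂ is at least the minimum of its values at T₁ and T₃. -/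
open Real Set

/-!
With `β = 1 / T`, the log-likelihood equals `-log F β` for `F β = ∑ j, exp ((l j - l y) * β)`.
`F` is a sum of exponentials, hence convex and in particular quasiconvex; quasiconvexity survives
post-composition with the map `log`, monotone on the (positive) values of `F`, and the antitone
reparametrization `T ↦ T⁻¹` of `(0, ∞)`, while the outer negation turns it into quasiconcavity.
-/

section Quasiconvex

variable {𝕜 E β γ : Type*}

theorem QuasiconvexOn.monotoneOn_comp [Semiring 𝕜] [PartialOrder 𝕜] [AddCommMonoid E] [SMul 𝕜 E]
    [LinearOrder β] [LinearOrder γ] {s : Set E} {t : Set β} {f : E → β} {g : β → γ}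
    (hg : MonotoneOn g t) (hft : MapsTo f s t) (hf : QuasiconvexOn 𝕜 s f) :
    QuasiconvexOn 𝕜 s (g ∘ f) := by
  rw [quasiconvexOn_iff_le_max] at hf ⊢
  refine ⟨hf.1, fun x hx y hy a b ha hb hab => ?_⟩
  have hle := hf.2 hx hy ha hb hab
  rcases max_choice (f x) (f y) with h | h <;> rw [h] at hle
  · exact (hg (hft (hf.1 hx hy ha hb hab)) (hft hx) hle).trans (le_max_left _ _)
  · exact (hg (hft (hf.1 hx hy ha hb hab)) (hft hy) hle).trans (le_max_right _ _)

theorem QuasiconvexOn.comp_antitoneOn [LinearOrder β] {s t : Set ℝ} {f : ℝ → β} {g : ℝ → ℝ}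
    (hf : QuasiconvexOn ℝ t f) (hg : AntitoneOn g s) (hgs : MapsTo g s t) (hs : Convex ℝ s) :
    QuasiconvexOn ℝ s (f ∘ g) := by
  refine fun r => Set.OrdConnected.convex ⟨fun x hx z hz w ⟨hxw, hwz⟩ => ?_⟩
  have hw : w ∈ s := hs.ordConnected.out hx.1 hz.1 ⟨hxw, hwz⟩
  have hseg : g w ∈ segment ℝ (g z) (g x) := by
    rw [segment_eq_Icc (hg hx.1 hz.1 (hxw.trans hwz))]
    exact ⟨hg hw hz.1 hwz, hg hx.1 hw hxw⟩
  exact ⟨hw, ((hf r).segment_subset ⟨hgs hz.1, hz.2⟩ ⟨hgs hx.1, hx.2⟩ hseg).2⟩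

theorem QuasiconcaveOn.min_le_of_mem_Icc_s15 [LinearOrder β] {s : Set ℝ} {f : ℝ → β}
    (hf : QuasiconcaveOn ℝ s f) {x y z : ℝ} (hx : x ∈ s) (hz : z ∈ s) (hy : y ∈ Icc x z) :
    min (f x) (f z) ≤ f y :=
  ((hf _).ordConnected.out ⟨hx, min_le_left _ _⟩ ⟨hz, min_le_right _ _⟩ hy).2

end Quasiconvex

theorem convexOn_sum_exp_mul {ι : Type*} (t : Finset ι) (d : ι → ℝ) :
    ConvexOn ℝ univ fun s => ∑ j ∈ t, exp (d j * s) := by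
  classical
  induction t using Finset.induction with
  | empty => simpa using convexOn_const (0 : ℝ) convex_univ
  | insert a t ha ih =>
    simp only [Finset.sum_insert ha]
    exact (convexOn_exp.comp_linearMap (d a • LinearMap.id)).add ih

theorem log_exp_div_sum_exp {ι : Type*} (t : Finset ι) (l : ι → ℝ) (a T : ℝ) :
    log (exp (a / T) / ∑ j ∈ t, exp (l j / T)) = -log (∑ j ∈ t, exp ((l j - a) * T⁻¹)) := by
  rw [← inv_div, log_inv, Finset.sum_div]
  refine congrArg (- log ·) (Finset.sum_congr rfl fun j _ => ?_)
  rw [← exp_sub, ← sub_div, div_eq_mul_inv]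

theorem quasiconcaveOn_log_exp_div_sum_exp_div {ι : Type*} [Fintype ι] (l : ι → ℝ) (y : ι) :
    QuasiconcaveOn ℝ (Ioi 0) fun T => log (exp (l y / T) / ∑ j, exp (l j / T)) := by
  set F : ℝ → ℝ := fun s => ∑ j, exp ((l j - l y) * s)
  have hF_pos : MapsTo F univ (Ioi 0) := fun s _ =>
    Finset.sum_pos (fun j _ => exp_pos _) ⟨y, Finset.mem_univ y⟩
  have hlogF : QuasiconvexOn ℝ univ (log ∘ F) :=
    (convexOn_sum_exp_mul _ _).quasiconvexOn.monotoneOn_comp strictMonoOn_log.monotoneOn hF_pos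
  have hinv : QuasiconvexOn ℝ (Ioi 0) ((log ∘ F) ∘ Inv.inv) :=
    hlogF.comp_antitoneOn (fun a ha b _ hab => inv_anti₀ ha hab) (mapsTo_univ _ _) (convex_Ioi 0)
  have hsplit : (fun T => log (exp (l y / T) / ∑ j, exp (l j / T))) =
      Neg.neg ∘ (log ∘ F) ∘ Inv.inv :=
    funext fun T => log_exp_div_sum_exp _ l (l y) T
  rw [hsplit]
  exact hinv.antitone_comp fun a b h => neg_le_neg h

theorem single_sample_log_likelihood_unimodal_general
    (m : ℕ) (l : Fin m → ℝ) (y : Fin m) :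
    ∀ T₁ T₂ T₃ : ℝ, 0 < T₁ → T₁ ≤ T₂ → T₂ ≤ T₃ →
      min (Real.log (Real.exp (l y / T₁) / ∑ j : Fin m, Real.exp (l j / T₁)))
          (Real.log (Real.exp (l y / T₃) / ∑ j : Fin m, Real.exp (l j / T₃))) ≤
        Real.log (Real.exp (l y / T₂) / ∑ j : Fin m, Real.exp (l j / T₂)) :=
  fun _ _ _ h₁ h₁₂ h₂₃ => (quasiconcaveOn_log_exp_div_sum_exp_div l y).min_le_of_mem_Icc_s15 h₁
    (mem_Ioi.2 (h₁.trans_le (h₁₂.trans h₂₃))) ⟨h₁₂, h₂₃⟩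

/-- The single-sample temperature-scaled log-likelihood is unimodal (quasiconcave) in the
temperature `T` on `(0, ∞)`. -/
theorem single_sample_log_likelihood_unimodal
    (m : ℕ) (hm : 1 ≤ m) (l : Fin m → ℝ) (y : Fin m) :
    ∀ T₁ T₂ T₃ : ℝ, 0 < T₁ → T₁ ≤ T₂ → T₂ ≤ T₃ →
      min (Real.log (Real.exp (l y / T₁) / ∑ j : Fin m, Real.exp (l j / T₁)))
          (Real.log (Real.exp (l y / T₃) / ∑ j : Fin m, Real.exp (l j / T₃))) ≤
        Real.log (Real.exp (l y / T₂) / ∑ j : Fin m, Real.exp (l j / T₂)) :=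
  single_sample_log_likelihood_unimodal_general m l y
end
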